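/- arXiv:1812.02298 — 3 statements merged into one kernel-verified Lean document; each statement's English description precedes it below -/
import Mathlib

section
/- Strong law of large numbers for finite ergodic Markov chains (used in the proofs of the LLN lemmas): (1/n) ∑_{k=1}^n a(X_k) converges almost surely, as n → ∞, to a* = ∑_i π*_i a(i), regardless of the initial distribution of the chain. -/
open MeasureTheory ProbabilityTheory Filter Finset Matrix Topology

/-!
Write `g = a - a*`, so that `π ⬝ᵥ g = 0`. Some power `P ^ k` has all entries at least `δ > 0`,
and Doeblin's argument shows that `P ^ k` shrinks the oscillation `max h - min h` of a vector by
the factor `1 - n δ < 1`; hence the oscillations of `P ^ t *ᵥ g` are summable. As `P ^ t *ᵥ g`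
stays centred under `π`, it is bounded by its oscillation. The Markov property gives
`E[g(X_k) g(X_{k+t})] = E[g(X_k) (P ^ t *ᵥ g)(X_k)]`, so the correlations are summable and the
partial sums `S_N = ∑_{k ≤ N} g(X_k)` satisfy `E[S_N²] = O(N)`. Then `∑_n E[(S_{n²}/n²)²] < ∞`,
so `S_{n²}/n² → 0` almost surely, and since `|S_N - S_M| ≤ ‖g‖_∞ (N - M)` this is enough to get
`S_N / N → 0`.
-/

lemma summable_of_le_mul_shift {o : ℕ → ℝ} {D θ : ℝ} {k : ℕ} (ho : ∀ t, 0 ≤ o t)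
    (hD : ∀ t, o t ≤ D) (hθ : θ < 1) (hshift : ∀ t, o (k + t) ≤ θ * o t) : Summable o := by
  refine summable_of_sum_range_le ho (c := k * D / (1 - θ)) fun N => ?_
  have hhead : ∑ t ∈ range k, o t ≤ k * D := by
    simpa using sum_le_sum fun t (_ : t ∈ range k) => hD t
  have htail : ∑ t ∈ range N, o (k + t) ≤ θ * ∑ t ∈ range N, o t := by
    rw [mul_sum]
    exact sum_le_sum fun t _ => hshift t
  have hsub : ∑ t ∈ range N, o t ≤ ∑ t ∈ range (k + N), o t :=
    sum_le_sum_of_subset_of_nonneg (range_subset_range.mpr (by omega)) fun t _ _ => ho t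
  rw [sum_range_add] at hsub
  rw [le_div_iff₀ (by linarith)]
  linarith

section Oscillation

variable {ι : Type*}

noncomputable def osc (h : ι → ℝ) : ℝ := ⨆ p : ι × ι, h p.1 - h p.2

lemma sub_le_osc [Finite ι] (h : ι → ℝ) (i j : ι) : h i - h j ≤ osc h :=
  le_ciSup (f := fun p : ι × ι => h p.1 - h p.2) (Set.finite_range _).bddAbove (i, j)

lemma osc_le [Nonempty ι] {h : ι → ℝ} {D : ℝ} (hD : ∀ i j, h i - h j ≤ D) : osc h ≤ D :=
  ciSup_le fun p => hD p.1 p.2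

lemma osc_nonneg [Finite ι] [Nonempty ι] (h : ι → ℝ) : 0 ≤ osc h := by
  simpa using sub_le_osc h (Classical.arbitrary ι) (Classical.arbitrary ι)

variable [Fintype ι]

lemma abs_le_osc {π h : ι → ℝ} (hπ : ∀ i, 0 < π i) (hh : π ⬝ᵥ h = 0) (i : ι) :
    |h i| ≤ osc h := by
  have : Nonempty ι := ⟨i⟩
  obtain ⟨jmax, hjmax⟩ := Finite.exists_max h
  obtain ⟨jmin, hjmin⟩ := Finite.exists_min h
  have hmin : h jmin ≤ 0 := by
    by_contra! hpos
    have : 0 < π ⬝ᵥ h :=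
      sum_pos (fun j _ => mul_pos (hπ j) (hpos.trans_le (hjmin j))) univ_nonempty
    linarith
  have hmax : 0 ≤ h jmax := by
    by_contra! hneg
    have : π ⬝ᵥ h < 0 :=
      sum_neg (fun j _ => mul_neg_of_pos_of_neg (hπ j) ((hjmax j).trans_lt hneg)) univ_nonempty
    linarith
  rw [abs_le]
  constructor <;> linarith [sub_le_osc h jmax i, sub_le_osc h i jmin]

/- Doeblin: `(Q *ᵥ h) i` is `δ * ∑ j, h j` plus an average of `h` against the weights
`Q i j - δ ≥ 0`, whose total mass `1 - card ι * δ` does not depend on `i`. -/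
lemma osc_mulVec_le [Nonempty ι] {Q : Matrix ι ι ℝ} {δ : ℝ} (hQ : ∀ i j, δ ≤ Q i j)
    (hQrow : ∀ i, ∑ j, Q i j = 1) (h : ι → ℝ) :
    osc (Q *ᵥ h) ≤ (1 - Fintype.card ι * δ) * osc h := by
  obtain ⟨jmax, hjmax⟩ := Finite.exists_max h
  obtain ⟨jmin, hjmin⟩ := Finite.exists_min h
  set θ := 1 - Fintype.card ι * δ
  have hmass : ∀ i, ∑ j, (Q i j - δ) = θ := fun i => by
    simp [sum_sub_distrib, hQrow, θ]
  have hsplit : ∀ i, (Q *ᵥ h) i = ∑ j, (Q i j - δ) * h j + δ * ∑ j, h j := fun i => by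
    simp [mulVec, dotProduct, sub_mul, sum_sub_distrib, mul_sum]
  refine osc_le fun i i' => ?_
  have hup : ∑ j, (Q i j - δ) * h j ≤ θ * h jmax := by
    rw [← hmass i, sum_mul]
    exact sum_le_sum fun j _ => mul_le_mul_of_nonneg_left (hjmax j) (sub_nonneg.mpr (hQ i j))
  have hlow : θ * h jmin ≤ ∑ j, (Q i' j - δ) * h j := by
    rw [← hmass i', sum_mul]
    exact sum_le_sum fun j _ => mul_le_mul_of_nonneg_left (hjmin j) (sub_nonneg.mpr (hQ i' j))
  have hθ : 0 ≤ θ := hmass i ▸ sum_nonneg fun j _ => sub_nonneg.mpr (hQ i j)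
  calc (Q *ᵥ h) i - (Q *ᵥ h) i' ≤ θ * (h jmax - h jmin) := by rw [hsplit, hsplit]; linarith
    _ ≤ θ * osc h := mul_le_mul_of_nonneg_left (sub_le_osc h jmax jmin) hθ

variable [DecidableEq ι]

lemma osc_mulVec_le_of_mem_rowStochastic [Nonempty ι] {Q : Matrix ι ι ℝ}
    (hQ : Q ∈ rowStochastic ℝ ι) (h : ι → ℝ) : osc (Q *ᵥ h) ≤ osc h := by
  simpa using osc_mulVec_le (δ := 0) (fun i j => nonneg_of_mem_rowStochastic hQ)
    (sum_row_of_mem_rowStochastic hQ) h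

lemma summable_osc_pow_mulVec [Nonempty ι] {P : Matrix ι ι ℝ} (hP : P ∈ rowStochastic ℝ ι)
    (hprim : ∃ k, ∀ i j, 0 < (P ^ k) i j) (h : ι → ℝ) :
    Summable fun t => osc (P ^ t *ᵥ h) := by
  obtain ⟨k, hk⟩ := hprim
  obtain ⟨p, hp⟩ := Finite.exists_min fun p : ι × ι => (P ^ k) p.1 p.2
  have hθ : 1 - Fintype.card ι * (P ^ k) p.1 p.2 < 1 :=
    sub_lt_self _ (mul_pos (Nat.cast_pos.mpr Fintype.card_pos) (hk p.1 p.2))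
  refine summable_of_le_mul_shift (k := k) (fun t => osc_nonneg _)
    (fun t => osc_mulVec_le_of_mem_rowStochastic (pow_mem hP t) h) hθ fun t => ?_
  rw [pow_add, ← mulVec_mulVec]
  exact osc_mulVec_le (fun i j => hp (i, j)) (sum_row_of_mem_rowStochastic (pow_mem hP k)) _

lemma vecMul_pow_eq_self {P : Matrix ι ι ℝ} {π : ι → ℝ} (hπP : π ᵥ* P = π) (t : ℕ) :
    π ᵥ* P ^ t = π := by
  induction t with
  | zero => simp
  | succ t ih => rw [pow_succ, ← vecMul_vecMul, ih, hπP]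

lemma mul_pow_mulVec_le_osc_mul_osc {P : Matrix ι ι ℝ} {π h : ι → ℝ} (hπ : ∀ i, 0 < π i)
    (hπP : π ᵥ* P = π) (hh : π ⬝ᵥ h = 0) (t : ℕ) (i : ι) :
    h i * (P ^ t *ᵥ h) i ≤ osc h * osc (P ^ t *ᵥ h) := by
  have hPh : π ⬝ᵥ (P ^ t *ᵥ h) = 0 := by rw [dotProduct_mulVec, vecMul_pow_eq_self hπP, hh]
  calc h i * (P ^ t *ᵥ h) i ≤ |h i| * |(P ^ t *ᵥ h) i| := by
        rw [← abs_mul]; exact le_abs_self _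
    _ ≤ osc h * osc (P ^ t *ᵥ h) :=
      mul_le_mul (abs_le_osc hπ hh i) (abs_le_osc hπ hPh i) (abs_nonneg _)
        ((abs_nonneg _).trans (abs_le_osc hπ hh i))

end Oscillation

section Averages

lemma abs_sum_Icc_sub_sum_Icc_le {y : ℕ → ℝ} {D : ℝ} (hy : ∀ k, |y k| ≤ D) {M N : ℕ}
    (hMN : M ≤ N) : |∑ k ∈ Icc 1 N, y k - ∑ k ∈ Icc 1 M, y k| ≤ D * (N - M) := by
  have hIcc : ∀ K, Icc 1 K = Ioc 0 K := Icc_add_one_left_eq_Ioc 0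
  rw [hIcc, hIcc, ← sum_Ioc_consecutive _ M.zero_le hMN, add_sub_cancel_left]
  calc |∑ k ∈ Ioc M N, y k| ≤ ∑ k ∈ Ioc M N, D :=
        (abs_sum_le_sum_abs _ _).trans (sum_le_sum fun k _ => hy k)
    _ = D * (N - M) := by simp [Nat.cast_sub hMN, mul_comm]

lemma tendsto_div_of_tendsto_comp_sq {s : ℕ → ℝ} {D : ℝ}
    (hs : ∀ M N, M ≤ N → |s N - s M| ≤ D * (N - M))
    (hsq : Tendsto (fun n : ℕ => s (n ^ 2) / (n : ℝ) ^ 2) atTop (𝓝 0)) :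
    Tendsto (fun N => s N / N) atTop (𝓝 0) := by
  have hD : 0 ≤ D := by simpa using (abs_nonneg _).trans (hs 0 1 zero_le_one)
  have hb : Tendsto (fun n : ℕ => |s (n ^ 2) / (n : ℝ) ^ 2| + 2 * D / n) atTop (𝓝 0) := by
    simpa using hsq.abs.add (tendsto_const_div_atTop_nhds_zero_nat (2 * D))
  have hsqrt : Tendsto Nat.sqrt atTop atTop :=
    tendsto_atTop_atTop.mpr fun n => ⟨n ^ 2, fun N hN => Nat.le_sqrt'.mpr hN⟩
  refine squeeze_zero_norm' ?_ (hb.comp hsqrt)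
  filter_upwards [eventually_ge_atTop 1] with N hN
  set n := Nat.sqrt N
  have hn : (1 : ℝ) ≤ n := by exact_mod_cast Nat.le_sqrt'.mpr (by simpa using hN)
  have hnN : n ^ 2 ≤ N := Nat.sqrt_le' N
  have hnNR : (n : ℝ) ^ 2 ≤ N := by exact_mod_cast hnN
  have hNnR : (N : ℝ) ≤ n ^ 2 + 2 * n := by
    have := Nat.lt_succ_sqrt' N
    exact_mod_cast (by nlinarith : N ≤ n ^ 2 + 2 * n)
  have hinc := hs _ _ hnN
  push_cast at hinc
  rw [Real.norm_eq_abs, abs_div, Nat.abs_cast, div_le_iff₀ (by positivity)]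
  calc |s N| ≤ |s (n ^ 2)| + D * (N - n ^ 2) := by
        linarith [abs_sub_abs_le_abs_sub (s N) (s (n ^ 2))]
    _ ≤ |s (n ^ 2)| + 2 * D * n := by nlinarith
    _ = (|s (n ^ 2) / (n : ℝ) ^ 2| + 2 * D / n) * (n : ℝ) ^ 2 := by
        rw [abs_div, abs_of_nonneg (sq_nonneg (n : ℝ))]
        field_simp
    _ ≤ (|s (n ^ 2) / (n : ℝ) ^ 2| + 2 * D / n) * N :=
        mul_le_mul_of_nonneg_left hnNR (by positivity)

lemma tendsto_sum_Icc_div_of_tendsto_sub {y : ℕ → ℝ} {c : ℝ}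
    (h : Tendsto (fun N : ℕ => (∑ k ∈ Icc 1 N, (y k - c)) / N) atTop (𝓝 0)) :
    Tendsto (fun N : ℕ => (∑ k ∈ Icc 1 N, y k) / N) atTop (𝓝 c) := by
  refine (zero_add c ▸ h.add_const c).congr' ?_
  filter_upwards [eventually_ne_atTop 0] with N hN
  have hN' : (N : ℝ) ≠ 0 := Nat.cast_ne_zero.mpr hN
  simp only [sum_sub_distrib, sum_const, Nat.card_Icc, add_tsub_cancel_right, nsmul_eq_mul]
  field_simp
  ring

lemma sum_comp_le_sum_range {s : Finset ℕ} {c : ℕ → ℝ} {e : ℕ → ℕ} {N : ℕ} (hc : ∀ t, 0 ≤ c t)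
    (he : Set.InjOn e s) (hes : ∀ l ∈ s, e l < N) : ∑ l ∈ s, c (e l) ≤ ∑ t ∈ range N, c t := by
  rw [← sum_image he]
  exact sum_le_sum_of_subset_of_nonneg (by simpa [subset_iff] using hes) fun t _ _ => hc t

lemma sum_Icc_le_two_mul_sum_range {E : ℕ → ℕ → ℝ} {c : ℕ → ℝ} (hc : ∀ t, 0 ≤ c t)
    (hE : ∀ k l, 1 ≤ k → k ≤ l → E k l ≤ c (l - k)) (hEsymm : ∀ k l, E k l = E l k)
    {N k : ℕ} (hk : k ∈ Icc 1 N) : ∑ l ∈ Icc 1 N, E k l ≤ 2 * ∑ t ∈ range N, c t := by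
  rw [mem_Icc] at hk
  rw [← sum_filter_add_sum_filter_not (Icc 1 N) (· < k), two_mul]
  gcongr
  · refine (sum_le_sum fun l hl => ?_).trans (sum_comp_le_sum_range (e := (k - ·)) hc ?_ ?_)
    · simp only [mem_filter, mem_Icc] at hl
      exact hEsymm k l ▸ hE l k hl.1.1 hl.2.le
    · intro l hl l' hl' h
      simp only [coe_filter, mem_Icc, Set.mem_ofPred_eq] at hl hl' h
      omega
    · intro l hl
      simp only [mem_filter, mem_Icc] at hl
      omega
  · refine (sum_le_sum fun l hl => ?_).trans (sum_comp_le_sum_range (e := (· - k)) hc ?_ ?_)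
    · simp only [mem_filter, mem_Icc] at hl
      exact hE k l hk.1 (not_lt.mp hl.2)
    · intro l hl l' hl' h
      simp only [coe_filter, mem_Icc, Set.mem_ofPred_eq] at hl hl' h
      omega
    · intro l hl
      simp only [mem_filter, mem_Icc] at hl
      omega

variable {Ω : Type*} [MeasurableSpace Ω] {μ : Measure Ω}

lemma integral_comp_eq_sum [IsFiniteMeasure μ] {α : Type*} [Fintype α] [MeasurableSpace α]
    [MeasurableSingletonClass α] {Z : Ω → α} (hZ : Measurable Z) (φ : α → ℝ) :
    ∫ ω, φ (Z ω) ∂μ = ∑ a, μ.real (Z ⁻¹' {a}) * φ a := by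
  rw [← integral_map hZ.aemeasurable (measurable_of_finite φ).aestronglyMeasurable,
    integral_fintype Integrable.of_finite]
  simp [map_measureReal_apply hZ (measurableSet_singleton _)]

lemma ae_tendsto_zero_of_summable_integral {f : ℕ → Ω → ℝ} (hf : ∀ n, Integrable (f n) μ)
    (hf0 : ∀ n ω, 0 ≤ f n ω) (hsum : Summable fun n => ∫ ω, f n ω ∂μ) :
    ∀ᵐ ω ∂μ, Tendsto (fun n => f n ω) atTop (𝓝 0) := by
  have hmeas : ∀ n, AEMeasurable (fun ω => ENNReal.ofReal (f n ω)) μ :=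
    fun n => (hf n).aemeasurable.ennreal_ofReal
  have hfin : ∫⁻ ω, ∑' n, ENNReal.ofReal (f n ω) ∂μ ≠ ⊤ := by
    rw [lintegral_tsum hmeas]
    simp_rw [← ofReal_integral_eq_lintegral_ofReal (hf _) (ae_of_all _ (hf0 _))]
    rw [← ENNReal.ofReal_tsum_of_nonneg (fun n => integral_nonneg (hf0 n)) hsum]
    exact ENNReal.ofReal_ne_top
  filter_upwards [ae_lt_top' (AEMeasurable.tsum hmeas) hfin] with ω hω
  simpa [ENNReal.toReal_ofReal (hf0 _ ω)] using (ENNReal.summable_toReal hω.ne).tendsto_atTop_zero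

lemma integral_sq_sum_Icc_le {Y : ℕ → Ω → ℝ} {c : ℕ → ℝ}
    (hY : ∀ k l, Integrable (fun ω => Y k ω * Y l ω) μ) (hc : ∀ t, 0 ≤ c t)
    (hcov : ∀ k l, 1 ≤ k → k ≤ l → ∫ ω, Y k ω * Y l ω ∂μ ≤ c (l - k)) (N : ℕ) :
    ∫ ω, (∑ k ∈ Icc 1 N, Y k ω) ^ 2 ∂μ ≤ 2 * N * ∑ t ∈ range N, c t := by
  have hexp : ∫ ω, (∑ k ∈ Icc 1 N, Y k ω) ^ 2 ∂μ
      = ∑ k ∈ Icc 1 N, ∑ l ∈ Icc 1 N, ∫ ω, Y k ω * Y l ω ∂μ := by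
    simp_rw [sq, sum_mul_sum]
    rw [integral_finsetSum _ fun k _ => integrable_finsetSum _ fun l _ => hY k l]
    exact sum_congr rfl fun k _ => integral_finsetSum _ fun l _ => hY k l
  have hsymm : ∀ k l, ∫ ω, Y k ω * Y l ω ∂μ = ∫ ω, Y l ω * Y k ω ∂μ := fun k l => by
    simp_rw [mul_comm]
  calc ∫ ω, (∑ k ∈ Icc 1 N, Y k ω) ^ 2 ∂μ ≤ ∑ k ∈ Icc 1 N, 2 * ∑ t ∈ range N, c t :=
        hexp ▸ sum_le_sum fun k hk => sum_Icc_le_two_mul_sum_range hc hcov hsymm hk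
    _ = 2 * N * ∑ t ∈ range N, c t := by simp; ring

theorem ae_tendsto_sum_Icc_div_zero [IsFiniteMeasure μ] {Y : ℕ → Ω → ℝ} {D : ℝ} {c : ℕ → ℝ}
    (hY : ∀ k, Measurable (Y k)) (hYD : ∀ k ω, |Y k ω| ≤ D) (hc0 : ∀ t, 0 ≤ c t)
    (hc : Summable c) (hcov : ∀ k l, 1 ≤ k → k ≤ l → ∫ ω, Y k ω * Y l ω ∂μ ≤ c (l - k)) :
    ∀ᵐ ω ∂μ, Tendsto (fun N : ℕ => (∑ k ∈ Icc 1 N, Y k ω) / N) atTop (𝓝 0) := by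
  set S : ℕ → Ω → ℝ := fun N ω => ∑ k ∈ Icc 1 N, Y k ω
  set K := ∑' t, c t
  have hSinc : ∀ ω M N, M ≤ N → |S N ω - S M ω| ≤ D * (N - M) :=
    fun ω M N => abs_sum_Icc_sub_sum_Icc_le fun k => hYD k ω
  have hSint : ∀ N, Integrable (fun ω => S N ω ^ 2) μ := fun N =>
    .of_bound ((measurable_sum _ fun k _ => hY k).pow_const 2).aestronglyMeasurable
      ((D * N) ^ 2) (ae_of_all _ fun ω => by
        have : |S N ω| ≤ D * N := by simpa [S] using hSinc ω 0 N N.zero_le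
        simpa [sq_abs] using pow_le_pow_left₀ (abs_nonneg _) this 2)
  have hYint : ∀ k l, Integrable (fun ω => Y k ω * Y l ω) μ := fun k l =>
    .of_bound ((hY k).mul (hY l)).aestronglyMeasurable (D * D) (ae_of_all _ fun ω => by
      rw [norm_mul]
      exact mul_le_mul (hYD k ω) (hYD l ω) (norm_nonneg _) ((abs_nonneg _).trans (hYD k ω)))
  have hS2 : ∀ N : ℕ, ∫ ω, S N ω ^ 2 ∂μ ≤ 2 * N * K := fun N =>
    (integral_sq_sum_Icc_le hYint hc0 hcov N).trans <| by
      gcongr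
      exact hc.sum_le_tsum (range N) fun t _ => hc0 t
  have hsq : ∀ᵐ ω ∂μ, Tendsto (fun n : ℕ => (S (n ^ 2) ω / (n : ℝ) ^ 2) ^ 2) atTop (𝓝 0) := by
    refine ae_tendsto_zero_of_summable_integral (fun n => ?_) (fun n ω => sq_nonneg _) ?_
    · simpa [div_pow] using (hSint (n ^ 2)).div_const (((n : ℝ) ^ 2) ^ 2)
    refine ((Real.summable_one_div_nat_pow.mpr one_lt_two).mul_left (2 * K)).of_nonneg_of_le
      (fun n => integral_nonneg fun ω => sq_nonneg _) fun n => ?_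
    rcases n.eq_zero_or_pos with rfl | hn
    · simp
    have hnR : (0 : ℝ) < n := by exact_mod_cast hn
    have hS2n := hS2 (n ^ 2)
    push_cast at hS2n
    simp_rw [div_pow]
    rw [integral_div, div_le_iff₀ (by positivity)]
    calc ∫ ω, S (n ^ 2) ω ^ 2 ∂μ ≤ 2 * (n : ℝ) ^ 2 * K := hS2n
      _ = 2 * K * (1 / (n : ℝ) ^ 2) * ((n : ℝ) ^ 2) ^ 2 := by field_simp
  filter_upwards [hsq] with ω hω
  refine tendsto_div_of_tendsto_comp_sq (hSinc ω) ((tendsto_zero_iff_abs_tendsto_zero _).mpr ?_)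
  simpa [Real.sqrt_sq_eq_abs, Function.comp_def] using hω.sqrt

end Averages

section MarkovChain

variable {Ω ι : Type*}

def pathCylinder (X : ℕ → Ω → ι) (S : Set ℕ) (f : ℕ → ι) : Set Ω := ⋂ j ∈ S, {ω | X j ω = f j}

/- The chain is `X 1, X 2, …`: nothing is assumed about `X 0`. -/
def IsMarkovChain [MeasurableSpace Ω] (μ : Measure Ω) (P : Matrix ι ι ℝ) (X : ℕ → Ω → ι) :
    Prop :=
  ∀ k : ℕ, 1 ≤ k → ∀ f : ℕ → ι, μ (pathCylinder X (Set.Icc 1 (k + 1)) f)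
    = μ (pathCylinder X (Set.Icc 1 k) f) * ENNReal.ofReal (P (f k) (f (k + 1)))

variable {X : ℕ → Ω → ι}

lemma pathCylinder_insert (r : ℕ) (S : Set ℕ) (f : ℕ → ι) :
    pathCylinder X (insert r S) f = {ω | X r ω = f r} ∩ pathCylinder X S f :=
  Set.biInter_insert r S _

lemma pathCylinder_congr {S : Set ℕ} {f f' : ℕ → ι} (h : Set.EqOn f f' S) :
    pathCylinder X S f = pathCylinder X S f' :=
  Set.iInter₂_congr fun j hj => by rw [h hj]

lemma pathCylinder_subset {S : Set ℕ} {k : ℕ} (hk : k ∈ S) (f : ℕ → ι) :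
    pathCylinder X S f ⊆ {ω | X k ω = f k} :=
  Set.biInter_subset_of_mem hk

lemma pathCylinder_update_of_notMem {r : ℕ} {S : Set ℕ} (hr : r ∉ S) (f : ℕ → ι) (l : ι) :
    pathCylinder X S (Function.update f r l) = pathCylinder X S f :=
  pathCylinder_congr fun _ hj => Function.update_of_ne (ne_of_mem_of_not_mem hj hr) _ _

variable [MeasurableSpace Ω] {μ : Measure Ω}

lemma measurableSet_pathCylinder [MeasurableSpace ι] [MeasurableSingletonClass ι]
    (hX : ∀ k, Measurable (X k)) (S : Set ℕ) (f : ℕ → ι) : MeasurableSet (pathCylinder X S f) :=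
  .biInter S.to_countable fun j _ => hX j (measurableSet_singleton (f j))

lemma IsMarkovChain.measureReal_pathCylinder_succ {P : Matrix ι ι ℝ} (hM : IsMarkovChain μ P X)
    (hP : ∀ i j, 0 ≤ P i j) {k : ℕ} (hk : 1 ≤ k) (f : ℕ → ι) :
    μ.real (pathCylinder X (Set.Icc 1 (k + 1)) f)
      = μ.real (pathCylinder X (Set.Icc 1 k) f) * P (f k) (f (k + 1)) := by
  rw [measureReal_def, hM k hk f, ENNReal.toReal_mul, ENNReal.toReal_ofReal (hP _ _),
    measureReal_def]

variable [Fintype ι] [MeasurableSpace ι] [MeasurableSingletonClass ι] [IsFiniteMeasure μ]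

lemma measureReal_pathCylinder_inter_eq_sum (hX : ∀ k, Measurable (X k)) {r : ℕ} {S : Set ℕ}
    (hr : r ∉ S) (f : ℕ → ι) {B : Set Ω} (hB : MeasurableSet B) :
    μ.real (pathCylinder X S f ∩ B)
      = ∑ l, μ.real (pathCylinder X (insert r S) (Function.update f r l) ∩ B) := by
  simp_rw [pathCylinder_insert, pathCylinder_update_of_notMem hr, Function.update_self,
    Set.inter_assoc]
  rw [← measureReal_iUnion_fintype]
  · congr 1
    ext ω
    simp
  · exact fun l l' hll' => Set.disjoint_left.mpr fun ω h h' => hll' (h.1.symm.trans h'.1)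
  · exact fun l => (hX r (measurableSet_singleton l)).inter
      ((measurableSet_pathCylinder hX S f).inter hB)

variable [DecidableEq ι] {P : Matrix ι ι ℝ}

namespace IsMarkovChain

lemma measureReal_pathCylinder_inter_eq (hM : IsMarkovChain μ P X) (hP : ∀ i j, 0 ≤ P i j)
    (hX : ∀ k, Measurable (X k)) (t : ℕ) {k : ℕ} (hk : 1 ≤ k) (f : ℕ → ι) (j : ι) :
    μ.real (pathCylinder X (Set.Icc 1 k) f ∩ {ω | X (k + t) ω = j})
      = μ.real (pathCylinder X (Set.Icc 1 k) f) * (P ^ t) (f k) j := by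
  induction t generalizing k f with
  | zero =>
    have hsub := pathCylinder_subset (X := X) (Set.right_mem_Icc.mpr hk) f
    by_cases hj : f k = j
    · rw [add_zero, Set.inter_eq_left.mpr (hj ▸ hsub), pow_zero, one_apply, if_pos hj, mul_one]
    · rw [add_zero, pow_zero, one_apply, if_neg hj, mul_zero,
        Set.disjoint_iff_inter_eq_empty.mp ?_, measureReal_empty]
      exact Set.disjoint_left.mpr fun ω hω hω' => hj ((hsub hω).symm.trans hω')
  | succ t ih =>
    have hins : insert (k + 1) (Set.Icc 1 k) = Set.Icc 1 (k + 1) := by ext; simp; omega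
    have hk1 : k + 1 ∉ Set.Icc 1 k := by simp
    rw [pow_succ', mul_apply, mul_sum, measureReal_pathCylinder_inter_eq_sum hX hk1 f
      (hX _ (measurableSet_singleton j)) (B := {ω | X (k + (t + 1)) ω = j}), hins,
      show k + (t + 1) = k + 1 + t by omega]
    simp_rw [ih (k := k + 1) (by omega), hM.measureReal_pathCylinder_succ hP hk,
      pathCylinder_update_of_notMem hk1, Function.update_self,
      Function.update_of_ne (Nat.succ_ne_self k).symm, mul_assoc]

lemma measureReal_inter_eq (hM : IsMarkovChain μ P X) (hP : ∀ i j, 0 ≤ P i j)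
    (hX : ∀ k, Measurable (X k)) (t : ℕ) {k : ℕ} (hk : 1 ≤ k) (i j : ι) :
    μ.real ({ω | X k ω = i} ∩ {ω | X (k + t) ω = j}) = μ.real {ω | X k ω = i} * (P ^ t) i j := by
  have hB : MeasurableSet {ω | X (k + t) ω = j} := hX _ (measurableSet_singleton j)
  -- Sum out the values at times `1, …, r - 1`, one at a time.
  have hmarginal : ∀ r, 1 ≤ r → r ≤ k → ∀ f : ℕ → ι,
      μ.real (pathCylinder X (Set.Icc r k) f ∩ {ω | X (k + t) ω = j})
        = μ.real (pathCylinder X (Set.Icc r k) f) * (P ^ t) (f k) j := by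
    intro r hr
    induction r, hr using Nat.le_induction with
    | base => exact fun _ f => hM.measureReal_pathCylinder_inter_eq hP hX t hk f j
    | succ r hr ih =>
      intro hrk f
      have hr' : r ∉ Set.Icc (r + 1) k := by simp
      have hins : insert r (Set.Icc (r + 1) k) = Set.Icc r k := by ext; simp; omega
      rw [measureReal_pathCylinder_inter_eq_sum hX hr' f hB,
        ← Set.inter_univ (pathCylinder X (Set.Icc (r + 1) k) f),
        measureReal_pathCylinder_inter_eq_sum hX hr' f MeasurableSet.univ, sum_mul]
      simp_rw [Set.inter_univ, hins, ih (by omega), Function.update_of_ne (by omega : k ≠ r)]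
  simpa [pathCylinder] using hmarginal k hk le_rfl fun _ => i

lemma integral_mul_comp_add (hM : IsMarkovChain μ P X) (hP : ∀ i j, 0 ≤ P i j)
    (hX : ∀ k, Measurable (X k)) (t : ℕ) {k : ℕ} (hk : 1 ≤ k) (g h : ι → ℝ) :
    ∫ ω, g (X k ω) * h (X (k + t) ω) ∂μ
      = ∑ i, μ.real {ω | X k ω = i} * (g i * (P ^ t *ᵥ h) i) := by
  rw [integral_comp_eq_sum ((hX k).prodMk (hX (k + t))) fun p => g p.1 * h p.2,
    Fintype.sum_prod_type]
  refine sum_congr rfl fun i _ => ?_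
  have hpre : ∀ j, (fun ω => (X k ω, X (k + t) ω)) ⁻¹' {(i, j)}
      = {ω | X k ω = i} ∩ {ω | X (k + t) ω = j} := fun j => by ext; simp
  simp_rw [hpre, hM.measureReal_inter_eq hP hX t hk, mulVec, dotProduct, mul_sum]
  exact sum_congr rfl fun j _ => by ring

lemma integral_mul_comp_add_le [IsProbabilityMeasure μ] (hM : IsMarkovChain μ P X)
    (hP : ∀ i j, 0 ≤ P i j) (hX : ∀ k, Measurable (X k)) {t k : ℕ} (hk : 1 ≤ k) {g h : ι → ℝ}
    {b : ℝ} (hb : ∀ i, g i * (P ^ t *ᵥ h) i ≤ b) :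
    ∫ ω, g (X k ω) * h (X (k + t) ω) ∂μ ≤ b := by
  have hsum : ∑ i, μ.real {ω | X k ω = i} = 1 := by
    have h1 := integral_comp_eq_sum (μ := μ) (hX k) fun _ => (1 : ℝ)
    simp only [integral_const, probReal_univ, smul_eq_mul, mul_one] at h1
    exact h1.symm
  rw [hM.integral_mul_comp_add hP hX t hk]
  calc ∑ i, μ.real {ω | X k ω = i} * (g i * (P ^ t *ᵥ h) i)
      ≤ ∑ i, μ.real {ω | X k ω = i} * b :=
        sum_le_sum fun i _ => mul_le_mul_of_nonneg_left (hb i) measureReal_nonneg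
    _ = b := by rw [← sum_mul, hsum, one_mul]

end IsMarkovChain

end MarkovChain

theorem SLLN_finite_ergodic_Markov_chain_general
    {Ω : Type*} [MeasurableSpace Ω] (Pr : Measure Ω) [IsProbabilityMeasure Pr]
    (m : ℕ)
    (P : Matrix (Fin m) (Fin m) ℝ)
    (hPnn : ∀ i j, 0 ≤ P i j)
    (hProw : ∀ i, ∑ j, P i j = 1)
    (hPprim : ∃ k : ℕ, ∀ i j, 0 < (P ^ k) i j)
    (π : Fin m → ℝ)
    (hπpos : ∀ i, 0 < π i) (hπsum : ∑ i, π i = 1)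
    (hπstat : ∀ j, ∑ i, π i * P i j = π j)
    (X : ℕ → Ω → Fin m)
    (hXmeas : ∀ k, Measurable (X k))
    (hXmarkov : ∀ k : ℕ, 1 ≤ k → ∀ f : ℕ → Fin m,
      Pr (⋂ j ∈ Set.Icc 1 (k + 1), {ω | X j ω = f j})
        = Pr (⋂ j ∈ Set.Icc 1 k, {ω | X j ω = f j}) * ENNReal.ofReal (P (f k) (f (k + 1))))
    (a : Fin m → ℝ)
    (astar : ℝ) (hastar : astar = ∑ i, π i * a i) :
    ∀ᵐ ω ∂Pr, Tendsto (fun n : ℕ => (∑ k ∈ Finset.Icc 1 n, a (X k ω)) / n)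
      atTop (𝓝 astar) := by
  have : Nonempty (Fin m) := ⟨X 0 (nonempty_of_isProbabilityMeasure Pr).some⟩
  have hM : IsMarkovChain Pr P X := hXmarkov
  have hP : P ∈ rowStochastic ℝ (Fin m) := mem_rowStochastic_iff_sum.mpr ⟨hPnn, hProw⟩
  have hπP : π ᵥ* P = π := funext hπstat
  set g : Fin m → ℝ := fun i => a i - astar
  have hg : π ⬝ᵥ g = 0 := by
    simp [g, dotProduct, mul_sub, sum_sub_distrib, ← sum_mul, hπsum, hastar]
  have hcov : ∀ k l, 1 ≤ k → k ≤ l →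
      ∫ ω, g (X k ω) * g (X l ω) ∂Pr ≤ osc g * osc (P ^ (l - k) *ᵥ g) := by
    intro k l hk hkl
    obtain ⟨t, rfl⟩ := Nat.exists_eq_add_of_le hkl
    simpa using hM.integral_mul_comp_add_le hPnn hXmeas hk
      (mul_pow_mulVec_le_osc_mul_osc hπpos hπP hg t)
  filter_upwards [ae_tendsto_sum_Icc_div_zero (fun k => (measurable_of_finite g).comp (hXmeas k))
    (fun k ω => abs_le_osc hπpos hg (X k ω)) (fun t => mul_nonneg (osc_nonneg g) (osc_nonneg _))
    ((summable_osc_pow_mulVec hP hPprim g).mul_left (osc g)) hcov] with ω hω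
  exact tendsto_sum_Icc_div_of_tendsto_sub hω

/-- Strong law of large numbers for finite ergodic Markov chains:
`(1/n) ∑_{k=1}^n a(X_k) → a* = ∑_i π*_i a(i)` almost surely, regardless of the
initial distribution of the chain. -/
theorem SLLN_finite_ergodic_Markov_chain
    {Ω : Type*} [MeasurableSpace Ω] (Pr : Measure Ω) [IsProbabilityMeasure Pr]
    (m : ℕ) (hm : 1 ≤ m)
    (P : Matrix (Fin m) (Fin m) ℝ)
    (hPnn : ∀ i j, 0 ≤ P i j)
    (hProw : ∀ i, ∑ j, P i j = 1)
    (hPprim : ∃ k : ℕ, ∀ i j, 0 < (P ^ k) i j)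
    (π : Fin m → ℝ)
    (hπpos : ∀ i, 0 < π i) (hπsum : ∑ i, π i = 1)
    (hπstat : ∀ j, ∑ i, π i * P i j = π j)
    (X : ℕ → Ω → Fin m)
    (hXmeas : ∀ k, Measurable (X k))
    (hXmarkov : ∀ k : ℕ, 1 ≤ k → ∀ f : ℕ → Fin m,
      Pr (⋂ j ∈ Set.Icc 1 (k + 1), {ω | X j ω = f j})
        = Pr (⋂ j ∈ Set.Icc 1 k, {ω | X j ω = f j}) * ENNReal.ofReal (P (f k) (f (k + 1))))
    (a : Fin m → ℝ)
    (astar : ℝ) (hastar : astar = ∑ i, π i * a i) :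
    ∀ᵐ ω ∂Pr, Tendsto (fun n : ℕ => (∑ k ∈ Finset.Icc 1 n, a (X k ω)) / n)
      atTop (𝓝 astar) :=
  SLLN_finite_ergodic_Markov_chain_general Pr m P hPnn hProw hPprim π hπpos hπsum hπstat X hXmeas
    hXmarkov a astar hastar
end

section
/- Reduction of the general variance formula to the explicit two-state formula: for the 2×2 transition matrix P with P(1,1) = p, P(1,2) = 1 − p, P(2,2) = p', P(2,1) = 1 − p' (0 < p < 1, 0 < p' < 1), stationary distribution (π₁*, π₂*), values a₁, a₂ ∈ ℝ, a* := a₁π₁* + a₂π₂*, b(i) := a_i − a*, g := (P + Π* − I)⁻¹ b, and v(i) := b(i)² + ∑_j (g(j) − g(i))² P(i,j) − 2 b(i) ∑_j (g(j) − g(i)) P(i,j), one has the identity π₁*v(1) + π₂*v(2) = π₁*a₁² + π₂*a₂² + (π₁*a₁ + π₂*a₂)[−2a₁π₁* − 2a₂π₂* + (π₁*a₁ + π₂*a₂)(π₁* + π₂*)] + (π₁*(1−p) + π₂*(1−p'))(a₁ − a₂)²/(p + p' − 2)² + 2(a₂ − a₁)[(π₂*a₂(1−p') − π₁*a₁(1−p))/(p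 + p' − 2) + (π₁*a₁ + π₂*a₂)(π₁* − pπ₁* − π₂* + p'π₂*)/(p + p' − 2)]. -/
open Matrix Finset

/-- Reduction of the general variance formula to the explicit two-state formula:
for the 2×2 transition matrix `P = !![p, 1-p; 1-p', p']` with stationary
distribution `(π₁*, π₂*)`, the general variance `π₁* v(1) + π₂* v(2)` (with
`b(i) = aᵢ - a*`, `g = (P + Π* - I)⁻¹ b`) equals the explicit two-state
expression of the corollary "Diffusion Limit for GCHP2SDO". -/
theorem two_state_variance_formula
    (p p' : ℝ) (hp : 0 < p) (hp1 : p < 1) (hp' : 0 < p') (hp'1 : p' < 1)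
    (P : Matrix (Fin 2) (Fin 2) ℝ) (hP : P = !![p, 1 - p; 1 - p', p'])
    (π₁ π₂ : ℝ) (hπ₁pos : 0 < π₁) (hπ₂pos : 0 < π₂) (hπsum : π₁ + π₂ = 1)
    (hπstat₁ : π₁ * p + π₂ * (1 - p') = π₁)
    (hπstat₂ : π₁ * (1 - p) + π₂ * p' = π₂)
    (Pistar : Matrix (Fin 2) (Fin 2) ℝ) (hPis : Pistar = !![π₁, π₂; π₁, π₂])
    (a₁ a₂ : ℝ)
    (astar : ℝ) (hastar : astar = a₁ * π₁ + a₂ * π₂)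
    (b : Fin 2 → ℝ) (hb : b = ![a₁ - astar, a₂ - astar])
    (g : Fin 2 → ℝ) (hg : g = (P + Pistar - 1)⁻¹ *ᵥ b)
    (v : Fin 2 → ℝ)
    (hv : ∀ i, v i = (b i) ^ 2 + ∑ j, (g j - g i) ^ 2 * P i j
        - 2 * b i * ∑ j, (g j - g i) * P i j) :
    π₁ * v 0 + π₂ * v 1
      = π₁ * a₁ ^ 2 + π₂ * a₂ ^ 2
        + (π₁ * a₁ + π₂ * a₂) * (-2 * a₁ * π₁ - 2 * a₂ * π₂
            + (π₁ * a₁ + π₂ * a₂) * (π₁ + π₂))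
        + (π₁ * (1 - p) + π₂ * (1 - p')) * (a₁ - a₂) ^ 2 / (p + p' - 2) ^ 2
        + 2 * (a₂ - a₁) * ((π₂ * a₂ * (1 - p') - π₁ * a₁ * (1 - p)) / (p + p' - 2)
            + (π₁ * a₁ + π₂ * a₂) * (π₁ - p * π₁ - π₂ + p' * π₂) / (p + p' - 2)) := by
  obtain rfl : π₂ = 1 - π₁ := by linarith
  subst hP hPis hastar hb
  set d : ℝ := p + p' - 2 with hd
  have hd0 : d ≠ 0 := by rw [hd]; intro h; linarith
  set M : Matrix (Fin 2) (Fin 2) ℝ :=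
    !![p, 1 - p; 1 - p', p'] + !![π₁, 1 - π₁; π₁, 1 - π₁] - 1 with hMdef
  have hM : M = !![p + π₁ - 1, 1 - p + (1 - π₁); 1 - p' + π₁, p' + (1 - π₁) - 1] := by
    rw [hMdef]
    ext i j
    fin_cases i <;> fin_cases j <;> simp [Matrix.one_apply] <;> ring
  have hdet : M.det = d := by
    rw [hM, Matrix.det_fin_two_of, hd]; ring
  have hunit : IsUnit M.det := by
    rw [hdet]; exact isUnit_iff_ne_zero.mpr hd0
  set b1 : ℝ := a₁ - (a₁ * π₁ + a₂ * (1 - π₁)) with hb1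
  set b2 : ℝ := a₂ - (a₁ * π₁ + a₂ * (1 - π₁)) with hb2
  set G : Fin 2 → ℝ :=
    ![((p' + (1 - π₁) - 1) * b1 - (1 - p + (1 - π₁)) * b2) / d,
      (-(1 - p' + π₁) * b1 + (p + π₁ - 1) * b2) / d] with hG
  have hMg : M *ᵥ G = ![b1, b2] := by
    rw [hM]
    funext i
    fin_cases i <;>
      · simp [hG, Matrix.mulVec, dotProduct, Fin.sum_univ_two]
        field_simp
        ring
  have hgG : g = G := by
    rw [hg, ← hMg, Matrix.mulVec_mulVec, Matrix.nonsing_inv_mul _ hunit,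
      Matrix.one_mulVec]
  rw [hv 0, hv 1]
  simp only [Fin.sum_univ_two, hgG, hG, Matrix.cons_val_zero, Matrix.cons_val_one,
    Matrix.head_cons, Matrix.of_apply, Matrix.cons_val', Matrix.empty_val',
    Matrix.cons_val_fin_one]
  rw [hb1, hb2]
  field_simp
  ring
end

section
/- Reduction of the two-state variance formula to the fixed-tick (CHPDO) formula: for the 2×2 transition matrix with p := ℙ(stay in state δ), p' := ℙ(stay in state −δ) (0 < p < 1, 0 < p' < 1), stationary distribution (π*, 1 − π*) (π* the stationary probability of state δ), and state values a(δ) = δ, a(−δ) = −δ with δ > 0, the stationary mean satisfies ∑_i π*_i a(i) = δ(2π* − 1), and the general variance ∑_i π*_i v(i) (with b(i) := a(i) − δ(2π* − 1), g := (P + Π* − I)⁻¹ b, v(i) := b(i)² + ∑_j (g(j) − g(i))² P(i,j) − 2 b(i) ∑_j (g(j) − g(i)) P(i,j)) equals 4δ²((1 − p' + π*(p' − p))/(p + p' − 2)² − π*(1 − π*)). -/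
open Matrix Finset

/-- Reduction of the two-state variance formula to the fixed-tick (CHPDO)
formula: for the 2×2 transition matrix with stay probabilities `p` (state `δ`,
encoded as state `0`) and `p'` (state `-δ`, encoded as state `1`), stationary
distribution `(π*, 1 - π*)`, and state values `a = ![δ, -δ]`, the stationary
mean is `δ(2π* - 1)` and the general variance equals
`4δ²((1 - p' + π*(p' - p))/(p + p' - 2)² - π*(1 - π*))`. -/
theorem CHPDO_variance_formula
    (δ : ℝ) (hδ : 0 < δ)
    (p p' : ℝ) (hp : 0 < p) (hp1 : p < 1) (hp' : 0 < p') (hp'1 : p' < 1)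
    (P : Matrix (Fin 2) (Fin 2) ℝ) (hP : P = !![p, 1 - p; 1 - p', p'])
    (π : ℝ) (hπpos : 0 < π) (hπlt : π < 1)
    (hπstat : π * p + (1 - π) * (1 - p') = π)
    (Pistar : Matrix (Fin 2) (Fin 2) ℝ) (hPis : Pistar = !![π, 1 - π; π, 1 - π])
    (a : Fin 2 → ℝ) (ha : a = ![δ, -δ])
    (b : Fin 2 → ℝ) (hb : ∀ i, b i = a i - δ * (2 * π - 1))
    (g : Fin 2 → ℝ) (hg : g = (P + Pistar - 1)⁻¹ *ᵥ b)
    (v : Fin 2 → ℝ)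
    (hv : ∀ i, v i = (b i) ^ 2 + ∑ j, (g j - g i) ^ 2 * P i j
        - 2 * b i * ∑ j, (g j - g i) * P i j) :
    π * a 0 + (1 - π) * a 1 = δ * (2 * π - 1) ∧
    π * v 0 + (1 - π) * v 1
      = 4 * δ ^ 2 * ((1 - p' + π * (p' - p)) / (p + p' - 2) ^ 2 - π * (1 - π)) := by
  have hs : p + p' - 2 ≠ 0 := by nlinarith
  have hπ' : π * (2 - p - p') = 1 - p' := by linear_combination -hπstat
  have hM : P + Pistar - (1 : Matrix (Fin 2) (Fin 2) ℝ)
      = !![p + π - 1, 2 - p - π; 1 - p' + π, p' - π] := by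
    subst hP hPis
    rw [Matrix.one_fin_two]
    ext i j
    fin_cases i <;> fin_cases j <;> simp <;> ring
  have hb0 : b 0 = 2 * δ * (1 - π) := by rw [hb 0, ha]; simp; ring
  have hb1 : b 1 = -(2 * δ * π) := by rw [hb 1, ha]; simp; ring
  have hdet : (!![p + π - 1, 2 - p - π; 1 - p' + π, p' - π] : Matrix (Fin 2) (Fin 2) ℝ).det
      = p + p' - 2 := by
    rw [Matrix.det_fin_two_of]; ring
  have hinv : (P + Pistar - 1)⁻¹
      = (p + p' - 2)⁻¹ • !![p' - π, -(2 - p - π); -(1 - p' + π), p + π - 1] := by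
    rw [hM, Matrix.inv_def, hdet, Matrix.adjugate_fin_two_of, Ring.inverse_eq_inv]
  have hg0 : g 0 = (p + p' - 2)⁻¹ * ((p' - π) * b 0 + (-(2 - p - π)) * b 1) := by
    rw [hg, hinv]
    simp [Matrix.mulVec, dotProduct, Fin.sum_univ_two]
    ring
  have hg1 : g 1 = (p + p' - 2)⁻¹ * ((-(1 - p' + π)) * b 0 + (p + π - 1) * b 1) := by
    rw [hg, hinv]
    simp [Matrix.mulVec, dotProduct, Fin.sum_univ_two]
    ring
  constructor
  · rw [ha]; simp; ring
  · have hπval : π = (1 - p') / (2 - p - p') := by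
      rw [eq_div_iff (by intro h; apply hs; linarith)]
      linarith [hπ']
    rw [hv 0, hv 1, hP]
    simp only [Fin.sum_univ_two]
    rw [hg0, hg1, hb0, hb1]
    simp only [Matrix.cons_val', Matrix.cons_val_zero, Matrix.cons_val_one, Matrix.head_cons,
      Matrix.empty_val', Matrix.cons_val_fin_one, Matrix.head_fin_const, Matrix.of_apply]
    rw [hπval]
    have h2 : (2 : ℝ) - p - p' ≠ 0 := by intro h; apply hs; linarith
    field_simp
    ring
end
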